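/- arXiv:math-ph/0303060 — 3 statements merged into one kernel-verified Lean document; each statement's English description precedes it below -/
import Mathlib

section
/- Superstability with optimal constants (Lemma of Lewis, Pulè and de Smedt): For every ε > 0 there exists L₀ > 0 such that for every cube Λ = [−L/2, L/2]^ν with side L ≥ L₀, every integer n ≥ 2 and every choice of points x₁, …, xₙ ∈ Λ, one has ∑_{1 ≤ i < j ≤ n} v(x_i − x_j) ≥ −(v(0)/2)·n + (v̂(0)(1 − ε)/(2V))·n², where V = L^ν. -/
open MeasureTheory

/-- The cube `Λ = [-L/2, L/2]^ν` in `ℝ^ν`. -/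
def cube (ν : ℕ) (L : ℝ) : Set (EuclideanSpace ℝ (Fin ν)) :=
  {y | ∀ i, |y i| ≤ L / 2}

set_option maxHeartbeats 1000000
noncomputable section SuperstabilityAux
variable {ν : ℕ}
local notation "E" => EuclideanSpace ℝ (Fin ν)

def ee (q x : E) : ℂ := Complex.exp (Complex.I * ((inner ℝ q x : ℝ) : ℂ))

lemma ee_norm (q x : E) : ‖ee q x‖ = 1 := by
  simp [ee, Complex.norm_exp]

lemma ee_abs (q x : E) : ‖ee q x‖ = 1 := by
  rw [ee_norm]

lemma ee_conj (q x : E) : (starRingEnd ℂ) (ee q x) = ee q (-x) := by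
  rw [ee, ← Complex.exp_conj]
  simp [ee, inner_neg_right]

lemma ee_mul_conj (q x y : E) : ee q x * (starRingEnd ℂ) (ee q y) = ee q (x - y) := by
  rw [ee_conj, ee, ee, ee, ← Complex.exp_add]
  congr 1
  rw [inner_neg_right, inner_sub_right]
  push_cast
  ring

lemma ee_cont_comp {X : Type*} [TopologicalSpace X] {f g : X → E}
    (hf : Continuous f) (hg : Continuous g) : Continuous fun p => ee (f p) (g p) := by
  unfold ee
  exact Complex.continuous_exp.comp
    (continuous_const.mul (Complex.continuous_ofReal.comp (hf.inner hg)))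

lemma ee_cont (x : E) : Continuous fun q : E => ee q x :=
  ee_cont_comp continuous_id continuous_const

lemma ee_zero (q : E) : ee q 0 = 1 := by simp [ee]

lemma int_of_bdd {α : Type*} [MeasurableSpace α] {μ : Measure α} [IsFiniteMeasure μ]
    {f : α → ℂ} (hm : AEStronglyMeasurable f μ) {C : ℝ} (hb : ∀ q, ‖f q‖ ≤ C) :
    Integrable f μ :=
  (integrable_const C).mono' hm (Filter.Eventually.of_forall hb)

lemma v_bounded (v : E → ℝ) (m : Measure E) [IsFiniteMeasure m]
    (hv : ∀ x, (v x : ℂ) = ∫ q, ee q x ∂m) (z : E) : |v z| ≤ v 0 := by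
  have h0 : (v 0 : ℂ) = ∫ q, (1 : ℂ) ∂m := by rw [hv 0]; simp [ee_zero]
  have h0' : v 0 = (m Set.univ).toReal := by
    have := h0
    rw [integral_const, Complex.real_smul, mul_one] at this
    exact_mod_cast this
  have : ‖(v z : ℂ)‖ ≤ (m Set.univ).toReal := by
    rw [hv z]
    calc ‖∫ q, ee q z ∂m‖ ≤ ∫ q, ‖ee q z‖ ∂m := norm_integral_le_integral_norm _
    _ = ∫ _q, (1:ℝ) ∂m := by simp [ee_norm, ee_abs]
    _ = (m Set.univ).toReal := by simp [measureReal_def]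
  rw [Complex.norm_real, Real.norm_eq_abs] at this
  rw [h0']
  exact this

theorem posdef (v : E → ℝ) (hv_cont : Continuous v) (m : Measure E) [IsFiniteMeasure m]
    (hv : ∀ x, (v x : ℂ) = ∫ q, ee q x ∂m)
    (Λ : Set E) (hfin : volume Λ ≠ ⊤)
    (n : ℕ) (x : Fin n → E) (c : ℝ) :
    2*c*(∑ i, ∫ y in Λ, v (x i - y)) ≤
      (∑ i, ∑ j, v (x i - x j)) + c^2 * ∫ a in Λ, ∫ b in Λ, v (a - b) := by
  set μ : Measure E := volume.restrict Λ with hμdef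
  haveI hμfin : IsFiniteMeasure μ := by
    constructor
    rw [hμdef, Measure.restrict_apply_univ]
    exact lt_top_iff_ne_top.mpr hfin
  set A : E → ℂ := fun q => ∑ i, ee q (x i) with hA
  set G : E → ℂ := fun q => ∫ y, ee q y ∂μ with hG
  set F : E → ℂ := fun q => A q - (c:ℂ) * G q with hF
  set K : ℝ := (μ Set.univ).toReal with hK
  have hA_cont : Continuous A := continuous_finset_sum _ fun i _ => ee_cont (x i)
  have hG_sm : StronglyMeasurable G :=
    (Continuous.stronglyMeasurable
      (ee_cont_comp continuous_fst continuous_snd)).integral_prod_right'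
  have hA_bd : ∀ q, ‖A q‖ ≤ n := by
    intro q
    calc ‖A q‖ ≤ ∑ i, ‖ee q (x i)‖ := norm_sum_le _ _
    _ = n := by simp [ee_norm, ee_abs]
  have hG_bd : ∀ q, ‖G q‖ ≤ K := by
    intro q
    calc ‖G q‖ ≤ ∫ y, ‖ee q y‖ ∂μ := norm_integral_le_integral_norm _
    _ = ∫ _y, (1:ℝ) ∂μ := by simp [ee_norm, ee_abs]
    _ = K := by simp [hK, measureReal_def]
  have hee_int : ∀ z : E, Integrable (fun q => ee q z) m := fun z =>
    int_of_bdd ((ee_cont z).aestronglyMeasurable) (fun q => (ee_norm q z).le)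
  -- Step 1 : AA
  have h1 : ∫ q, A q * (starRingEnd ℂ) (A q) ∂m
      = ((∑ i, ∑ j, v (x i - x j) : ℝ) : ℂ) := by
    have hpt : ∀ q, A q * (starRingEnd ℂ) (A q) = ∑ i, ∑ j, ee q (x i - x j) := by
      intro q
      rw [hA, map_sum, Finset.sum_mul_sum]
      exact Finset.sum_congr rfl fun i _ => Finset.sum_congr rfl fun j _ =>
        ee_mul_conj q (x i) (x j)
    simp_rw [hpt]
    rw [integral_finset_sum _ (fun i _ => integrable_finset_sum _ (fun j _ => hee_int _))]
    push_cast
    exact Finset.sum_congr rfl fun i _ => by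
      rw [integral_finset_sum _ (fun j _ => hee_int _)]
      exact Finset.sum_congr rfl fun j _ => ((hv _).symm)
  -- core multiplication identity
  have hcore : ∀ (q : E) (z : E),
      ee q z * (starRingEnd ℂ) (G q) = ∫ y, ee q (z - y) ∂μ := by
    intro q z
    rw [hG]
    rw [← integral_conj, ← integral_const_mul]
    simp_rw [ee_mul_conj]
  -- Step 2 : AG
  have h2pt : ∀ q, A q * (starRingEnd ℂ) (G q) = ∑ i, ∫ y, ee q (x i - y) ∂μ := by
    intro q
    rw [hA, Finset.sum_mul]
    exact Finset.sum_congr rfl fun i _ => hcore q (x i)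
  have hprod_int : ∀ z : E,
      Integrable (Function.uncurry fun q y => ee q (z - y)) (m.prod μ) := by
    intro z
    have hc : Continuous fun p : E × E => ee p.1 (z - p.2) :=
      ee_cont_comp continuous_fst (continuous_const.sub continuous_snd)
    exact int_of_bdd hc.aestronglyMeasurable (fun p => (ee_norm _ _).le)
  have h2int_q : ∀ i, Integrable (fun q => ∫ y, ee q (x i - y) ∂μ) m := by
    intro i
    have hsm : StronglyMeasurable fun q => ∫ y, ee q (x i - y) ∂μ :=
      StronglyMeasurable.integral_prod_right'
        (f := fun p : E × E => ee p.1 (x i - p.2))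
        (Continuous.stronglyMeasurable
          (ee_cont_comp continuous_fst (continuous_const.sub continuous_snd)))
    refine int_of_bdd hsm.aestronglyMeasurable (C := K) (fun q => ?_)
    calc ‖∫ y, ee q (x i - y) ∂μ‖ ≤ ∫ y, ‖ee q (x i - y)‖ ∂μ :=
        norm_integral_le_integral_norm _
    _ = ∫ _y, (1:ℝ) ∂μ := by simp [ee_norm, ee_abs]
    _ = K := by simp [hK, measureReal_def]
  have h2 : ∫ q, A q * (starRingEnd ℂ) (G q) ∂m
      = ((∑ i, ∫ y, v (x i - y) ∂μ : ℝ) : ℂ) := by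
    simp_rw [h2pt]
    rw [integral_finset_sum _ (fun i _ => h2int_q i)]
    push_cast
    refine Finset.sum_congr rfl fun i _ => ?_
    rw [integral_integral_swap (hprod_int (x i))]
    simp_rw [← hv]
    exact integral_ofReal
  -- Step 3 : GG
  have hGGq_int : ∀ q : E, Integrable (fun p : E × E => ee q (p.1 - p.2)) (μ.prod μ) := by
    intro q
    exact int_of_bdd ((ee_cont_comp continuous_const
      (continuous_fst.sub continuous_snd)).aestronglyMeasurable) (fun p => (ee_norm _ _).le)
  have h3pt : ∀ q, G q * (starRingEnd ℂ) (G q)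
      = ∫ p, ee q (p.1 - p.2) ∂(μ.prod μ) := by
    intro q
    have e1 : G q * (starRingEnd ℂ) (G q)
        = ∫ a, ee q a * (starRingEnd ℂ) (G q) ∂μ := by
      conv_lhs => rw [hG]
      rw [integral_mul_const]
    rw [e1]
    rw [show (fun a => ee q a * (starRingEnd ℂ) (G q)) = fun a => ∫ y, ee q (a - y) ∂μ from
      funext fun a => hcore q a]
    exact (integral_prod _ (hGGq_int q)).symm
  have hbig : Integrable
      (Function.uncurry fun (q : E) (p : E × E) => ee q (p.1 - p.2)) (m.prod (μ.prod μ)) := by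
    have hc : Continuous fun r : E × (E × E) => ee r.1 (r.2.1 - r.2.2) :=
      ee_cont_comp continuous_fst
        ((continuous_fst.comp continuous_snd).sub (continuous_snd.comp continuous_snd))
    exact int_of_bdd hc.aestronglyMeasurable (fun p => (ee_norm _ _).le)
  have hv_int_prod : Integrable (fun p : E × E => v (p.1 - p.2)) (μ.prod μ) := by
    refine (integrable_const (v 0)).mono'
      ((hv_cont.comp (continuous_fst.sub continuous_snd)).aestronglyMeasurable)
      (Filter.Eventually.of_forall fun p => ?_)
    rw [Real.norm_eq_abs]
    exact v_bounded v m hv _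
  have h3 : ∫ q, G q * (starRingEnd ℂ) (G q) ∂m
      = ((∫ a, ∫ b, v (a - b) ∂μ ∂μ : ℝ) : ℂ) := by
    simp_rw [h3pt]
    rw [integral_integral_swap hbig]
    simp_rw [← hv]
    rw [← integral_prod _ hv_int_prod]
    exact integral_ofReal
  -- Step 4 : expansion and conclusion
  have hexp : ∀ q, F q * (starRingEnd ℂ) (F q)
      = A q * (starRingEnd ℂ) (A q) - (c:ℂ) * (A q * (starRingEnd ℂ) (G q))
        - (c:ℂ) * (starRingEnd ℂ) (A q * (starRingEnd ℂ) (G q))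
        + (c:ℂ)^2 * (G q * (starRingEnd ℂ) (G q)) := by
    intro q
    simp only [hF, map_sub, map_mul, Complex.conj_conj, Complex.conj_ofReal]
    ring
  have hG_aesm : AEStronglyMeasurable G m := hG_sm.aestronglyMeasurable
  have hGc_aesm : AEStronglyMeasurable (fun q => (starRingEnd ℂ) (G q)) m :=
    continuous_star.comp_aestronglyMeasurable hG_aesm
  have iAA : Integrable (fun q => A q * (starRingEnd ℂ) (A q)) m := by
    refine int_of_bdd ((hA_cont.mul (continuous_star.comp hA_cont)).aestronglyMeasurable)
      (C := (n:ℝ)*n) (fun q => ?_)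
    rw [norm_mul]
    exact mul_le_mul (hA_bd q) (le_trans (le_of_eq (RCLike.norm_conj _)) (hA_bd q))
      (norm_nonneg _) (Nat.cast_nonneg n)
  have iAG : Integrable (fun q => A q * (starRingEnd ℂ) (G q)) m := by
    refine int_of_bdd (hA_cont.aestronglyMeasurable.mul hGc_aesm)
      (C := (n:ℝ)*K) (fun q => ?_)
    rw [norm_mul]
    exact mul_le_mul (hA_bd q) (le_trans (le_of_eq (RCLike.norm_conj _)) (hG_bd q))
      (norm_nonneg _) (Nat.cast_nonneg n)
  have iAGc : Integrable (fun q => (starRingEnd ℂ) (A q * (starRingEnd ℂ) (G q))) m := by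
    refine int_of_bdd (continuous_star.comp_aestronglyMeasurable
      (hA_cont.aestronglyMeasurable.mul hGc_aesm)) (C := (n:ℝ)*K) (fun q => ?_)
    rw [RCLike.norm_conj, norm_mul]
    exact mul_le_mul (hA_bd q) (le_trans (le_of_eq (RCLike.norm_conj _)) (hG_bd q))
      (norm_nonneg _) (Nat.cast_nonneg n)
  have iGG : Integrable (fun q => G q * (starRingEnd ℂ) (G q)) m := by
    refine int_of_bdd (hG_aesm.mul hGc_aesm) (C := K*K) (fun q => ?_)
    rw [norm_mul]
    exact mul_le_mul (hG_bd q) (le_trans (le_of_eq (RCLike.norm_conj _)) (hG_bd q))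
      (norm_nonneg _) ((norm_nonneg _).trans (hG_bd q))
  set S : ℝ := ∑ i, ∑ j, v (x i - x j) with hS
  set T : ℝ := ∑ i, ∫ y, v (x i - y) ∂μ with hT
  set DD : ℝ := ∫ a, ∫ b, v (a - b) ∂μ ∂μ with hDD
  have hFint : ∫ q, F q * (starRingEnd ℂ) (F q) ∂m
      = ((S - 2*c*T + c^2*DD : ℝ) : ℂ) := by
    calc ∫ q, F q * (starRingEnd ℂ) (F q) ∂m
        = ∫ q, (A q * (starRingEnd ℂ) (A q) - (c:ℂ) * (A q * (starRingEnd ℂ) (G q))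
          - (c:ℂ) * (starRingEnd ℂ) (A q * (starRingEnd ℂ) (G q))
          + (c:ℂ)^2 * (G q * (starRingEnd ℂ) (G q))) ∂m := by
          exact integral_congr_ae (Filter.Eventually.of_forall hexp)
      _ = ((S:ℂ) - (c:ℂ)*(T:ℂ) - (c:ℂ)*(starRingEnd ℂ) ((T:ℝ):ℂ) + (c:ℂ)^2*(DD:ℂ)) := by
          have i1 : Integrable (fun q => A q * (starRingEnd ℂ) (A q)
              - (c:ℂ) * (A q * (starRingEnd ℂ) (G q))) m := iAA.sub (iAG.const_mul _)
          have i2 : Integrable (fun q => A q * (starRingEnd ℂ) (A q)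
              - (c:ℂ) * (A q * (starRingEnd ℂ) (G q))
              - (c:ℂ) * (starRingEnd ℂ) (A q * (starRingEnd ℂ) (G q))) m :=
            i1.sub (iAGc.const_mul _)
          rw [integral_add i2 (iGG.const_mul _), integral_sub i1 (iAGc.const_mul _),
            integral_sub iAA (iAG.const_mul _), integral_const_mul, integral_const_mul,
            integral_const_mul, h1, h2, h3, integral_conj, h2]
      _ = ((S - 2*c*T + c^2*DD : ℝ) : ℂ) := by
          rw [Complex.conj_ofReal]
          push_cast
          ring
  have hFreal : ∫ q, F q * (starRingEnd ℂ) (F q) ∂m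
      = ((∫ q, Complex.normSq (F q) ∂m : ℝ) : ℂ) := by
    simp_rw [Complex.mul_conj]
    exact integral_ofReal
  have hkey : S - 2*c*T + c^2*DD = ∫ q, Complex.normSq (F q) ∂m :=
    Complex.ofReal_inj.mp (hFint.symm.trans hFreal)
  have hnn : 0 ≤ ∫ q, Complex.normSq (F q) ∂m :=
    integral_nonneg fun q => Complex.normSq_nonneg _
  rw [← hkey] at hnn
  linarith

lemma cube_closed (L : ℝ) : IsClosed (cube ν L) := by
  have : cube ν L = ⋂ i, {y : E | |y i| ≤ L / 2} := by
    ext y; simp [cube, Set.mem_iInter]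
  rw [this]
  refine isClosed_iInter fun i => ?_
  have hc : Continuous fun y : E => |y i| :=
    (continuous_abs.comp (EuclideanSpace.proj (𝕜 := ℝ) (i : Fin ν)).continuous)
  exact isClosed_le hc continuous_const

lemma cube_meas (L : ℝ) : MeasurableSet (cube ν L) := (cube_closed L).measurableSet

lemma cube_mono {L L' : ℝ} (h : L ≤ L') : cube ν L ⊆ cube ν L' := by
  intro y hy i
  exact le_trans (hy i) (by linarith)

lemma cube_volume (L : ℝ) : volume (cube ν L) = ENNReal.ofReal L ^ ν := by
  have h := (EuclideanSpace.volume_preserving_symm_measurableEquiv_toLp (Fin ν)).symm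
  rw [← h.map_eq, MeasurableEquiv.map_apply]
  have : (MeasurableEquiv.toLp 2 (Fin ν → ℝ)).symm.symm ⁻¹' (cube ν L)
      = Set.univ.pi fun _ => Set.Icc (-(L/2)) (L/2) := by
    ext y
    simp only [Set.mem_preimage, cube, Set.mem_setOf_eq, Set.mem_pi, Set.mem_univ, true_imp_iff,
      Set.mem_Icc]
    constructor
    · intro h i; have := h i; rw [abs_le] at this; exact this
    · intro h i; rw [abs_le]; exact h i
  rw [this, volume_pi_pi]
  simp [Real.volume_Icc]

lemma cube_volume_ne_top (L : ℝ) : volume (cube ν L) ≠ ⊤ := by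
  rw [cube_volume]
  exact (ENNReal.pow_lt_top ENNReal.ofReal_lt_top).ne

lemma cube_volume_toReal {L : ℝ} (hL : 0 ≤ L) : (volume (cube ν L)).toReal = L ^ ν := by
  rw [cube_volume, ENNReal.toReal_pow, ENNReal.toReal_ofReal hL]

lemma cube_iUnion_univ : (⋃ j : ℕ, cube ν j) = Set.univ := by
  ext y
  simp only [Set.mem_iUnion, Set.mem_univ, iff_true]
  obtain ⟨j, hj⟩ := exists_nat_ge (2 * ‖y‖)
  refine ⟨j, fun i => ?_⟩
  have h1 : |y i| ≤ ‖y‖ := by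
    rw [EuclideanSpace.norm_eq]
    rw [show |y i| = Real.sqrt (|y i|^2) by rw [Real.sqrt_sq_eq_abs, _root_.abs_abs]]
    apply Real.sqrt_le_sqrt
    exact Finset.single_le_sum (f := fun i => ‖y i‖^2)
      (fun j _ => sq_nonneg _) (Finset.mem_univ i) |>.trans_eq' (by rw [Real.norm_eq_abs])
  have h2 : 0 ≤ ‖y‖ := norm_nonneg _
  linarith

lemma tail_small (v : E → ℝ) (hv_int : Integrable v) {η : ℝ} (hη : 0 < η) :
    ∃ k : ℝ, 0 < k ∧ ∫ z in (cube ν k)ᶜ, |v z| ≤ η := by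
  have habs : Integrable (fun z : E => |v z|) := hv_int.abs
  have htend : Filter.Tendsto (fun j : ℕ => ∫ z in cube ν j, |v z|) Filter.atTop
      (nhds (∫ z in ⋃ j : ℕ, cube ν (j : ℝ), |v z|)) := by
    refine tendsto_setIntegral_of_monotone (fun j => cube_meas _) ?_ ?_
    · intro a b hab
      exact cube_mono (by exact_mod_cast hab)
    · rw [cube_iUnion_univ]
      exact habs.integrableOn
  rw [cube_iUnion_univ, setIntegral_univ] at htend
  have hlt : (∫ z, |v z|) - η < ∫ z, |v z| := by linarith
  have hev := htend.eventually (eventually_gt_nhds hlt)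
  rw [Filter.eventually_atTop] at hev
  obtain ⟨j₀, hj₀⟩ := hev
  have hj := hj₀ (max j₀ 1) (le_max_left _ _)
  have hj1 : (1:ℝ) ≤ ((max j₀ 1 : ℕ):ℝ) := by exact_mod_cast le_max_right j₀ 1
  refine ⟨((max j₀ 1 : ℕ):ℝ), by linarith, ?_⟩
  have hsplit := integral_add_compl (cube_meas (ν := ν) ((max j₀ 1 : ℕ):ℝ)) habs
  linarith [hsplit]

lemma sub_mem_compl {L k : ℝ} {x y : E} (hx : x ∈ cube ν L) (hy : y ∉ cube ν (L + k)) :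
    x - y ∉ cube ν k := by
  intro hmem
  apply hy
  intro i
  have h1 := hx i
  have h2 := hmem i
  have h3 : (x - y) i = x i - y i := by simp
  rw [h3] at h2
  have : |y i| ≤ |x i| + |x i - y i| := by
    calc |y i| = |x i - (x i - y i)| := by ring_nf
    _ ≤ |x i| + |x i - y i| := abs_sub _ _
  linarith

lemma cross_bound (v : E → ℝ) (hv_int : Integrable v)
    {L k : ℝ} {x : E} (hx : x ∈ cube ν L) :
    |(∫ y in cube ν (L + k), v (x - y)) - ∫ z, v z| ≤ ∫ z in (cube ν k)ᶜ, |v z| := by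
  have hint_x : Integrable (fun y => v (x - y)) := hv_int.comp_sub_left x
  have htot : ∫ y, v (x - y) = ∫ z, v z := integral_sub_left_eq_self v volume x
  have hsplit := integral_add_compl (cube_meas (ν := ν) (L + k)) hint_x
  -- w : tail indicator of |v|
  set w : E → ℝ := ((cube ν k)ᶜ).indicator (fun z => |v z|) with hw
  have hw_int : Integrable w := (hv_int.abs).indicator (cube_meas _).compl
  have hw_nonneg : ∀ z, 0 ≤ w z := fun z => Set.indicator_nonneg (fun z _ => abs_nonneg _) z
  have hwx_int : Integrable (fun y => w (x - y)) := hw_int.comp_sub_left x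
  have hstep : |∫ y in (cube ν (L + k))ᶜ, v (x - y)| ≤ ∫ z in (cube ν k)ᶜ, |v z| := by
    calc |∫ y in (cube ν (L + k))ᶜ, v (x - y)|
        ≤ ∫ y in (cube ν (L + k))ᶜ, |v (x - y)| := by
          exact norm_integral_le_integral_norm (fun y => v (x - y))
      _ ≤ ∫ y in (cube ν (L + k))ᶜ, w (x - y) := by
          refine setIntegral_mono_on (hint_x.abs.integrableOn) (hwx_int.integrableOn)
            (cube_meas _).compl (fun y hy => ?_)
          have hm : x - y ∈ (cube ν k)ᶜ := sub_mem_compl hx hy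
          exact le_of_eq (Set.indicator_of_mem hm (fun z => |v z|)).symm
      _ ≤ ∫ y, w (x - y) := by
          exact setIntegral_le_integral hwx_int
            (Filter.Eventually.of_forall (fun y => hw_nonneg _))
      _ = ∫ z, w z := integral_sub_left_eq_self w volume x
      _ = ∫ z in (cube ν k)ᶜ, |v z| := by
          rw [hw, integral_indicator (cube_meas _).compl]
  have : (∫ y in cube ν (L + k), v (x - y)) - ∫ z, v z
      = - ∫ y in (cube ν (L + k))ᶜ, v (x - y) := by
    rw [← htot, ← hsplit]; ring
  rw [this, abs_neg]
  exact hstep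

lemma v_even (v : E → ℝ) (m : Measure E) [IsFiniteMeasure m]
    (hv : ∀ x, (v x : ℂ) = ∫ q, Complex.exp (Complex.I * ((inner ℝ q x : ℝ) : ℂ)) ∂m)
    (z : E) : v (-z) = v z := by
  have h1 : ((v (-z) : ℝ) : ℂ) = (starRingEnd ℂ) ((v z : ℝ) : ℂ) := by
    rw [hv, hv, ← integral_conj]
    refine integral_congr_ae (Filter.Eventually.of_forall fun q => ?_)
    show Complex.exp (Complex.I * ((inner ℝ q (-z) : ℝ) : ℂ))
        = (starRingEnd ℂ) (Complex.exp (Complex.I * ((inner ℝ q z : ℝ) : ℂ)))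
    rw [← Complex.exp_conj]
    congr 1
    simp only [inner_neg_right, map_mul, Complex.conj_I, Complex.conj_ofReal]
    push_cast
    ring
  rw [Complex.conj_ofReal] at h1
  exact_mod_cast h1

lemma sum_split {n : ℕ} (x : Fin n → E) (v : E → ℝ) (hv_even : ∀ z, v (-z) = v z) :
    ∑ i : Fin n, ∑ j : Fin n, v (x i - x j)
      = n * v 0 + 2 * ∑ i : Fin n, ∑ j : Fin n, (if i < j then v (x i - x j) else 0) := by
  have h1 : ∀ i j : Fin n, v (x i - x j)
      = (if i < j then v (x i - x j) else 0) + (if j < i then v (x i - x j) else 0)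
        + (if i = j then v 0 else 0) := by
    intro i j
    rcases lt_trichotomy i j with h | h | h
    · simp [h, h.ne, h.asymm, not_lt_of_gt h]
    · simp [h, lt_irrefl, sub_self]
    · simp [h, h.ne', h.asymm, not_lt_of_gt h]
  have h2 : ∑ i : Fin n, ∑ j : Fin n, (if j < i then v (x i - x j) else 0)
      = ∑ i : Fin n, ∑ j : Fin n, (if i < j then v (x i - x j) else 0) := by
    rw [Finset.sum_comm]
    refine Finset.sum_congr rfl fun i _ => Finset.sum_congr rfl fun j _ => ?_
    by_cases h : i < j
    · rw [if_pos h, if_pos h]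
      rw [show x j - x i = -(x i - x j) from (neg_sub (x i) (x j)).symm, hv_even]
    · rw [if_neg h, if_neg h]
  have h3 : ∑ i : Fin n, ∑ j : Fin n, (if i = j then v 0 else 0) = n * v 0 := by
    simp [Finset.sum_ite_eq]
  calc ∑ i : Fin n, ∑ j : Fin n, v (x i - x j)
      = ∑ i : Fin n, ∑ j : Fin n, ((if i < j then v (x i - x j) else 0)
        + (if j < i then v (x i - x j) else 0) + (if i = j then v 0 else 0)) := by
        exact Finset.sum_congr rfl fun i _ => Finset.sum_congr rfl fun j _ => h1 i j
    _ = n * v 0 + 2 * ∑ i : Fin n, ∑ j : Fin n, (if i < j then v (x i - x j) else 0) := by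
        simp only [Finset.sum_add_distrib]
        rw [h2, h3]
        ring

lemma tendsto_ratio (k : ℝ) (hk : 0 < k) :
    Filter.Tendsto (fun L : ℝ => L^ν/(L+k)^ν) Filter.atTop (nhds 1) := by
  have h1 : Filter.Tendsto (fun L : ℝ => L/(L+k)) Filter.atTop (nhds 1) := by
    have h2 : Filter.Tendsto (fun L : ℝ => 1 - k/(L+k)) Filter.atTop (nhds (1 - 0)) := by
      refine Filter.Tendsto.sub tendsto_const_nhds ?_
      exact Filter.Tendsto.div_atTop tendsto_const_nhds
        (Filter.tendsto_atTop_add_const_right _ k Filter.tendsto_id)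
    rw [sub_zero] at h2
    refine h2.congr' ?_
    filter_upwards [Filter.eventually_gt_atTop 0] with L hL
    have : L + k ≠ 0 := by positivity
    field_simp
    ring
  have := h1.pow ν
  rw [one_pow] at this
  refine this.congr' ?_
  filter_upwards [Filter.eventually_gt_atTop 0] with L hL
  rw [div_pow]

end SuperstabilityAux

/-- **Superstability with optimal constants (Lewis–Pulè–de Smedt).**
For an integrable function `v` of positive type on `ℝ^ν` with `v̂(0) = ∫ v > 0`:
for every `ε > 0` there is `L₀ > 0` such that for every cube of side `L ≥ L₀`,
every `n ≥ 2` and all points `x₁, …, xₙ` in the cube,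
`∑_{i<j} v (xᵢ - xⱼ) ≥ -(v 0 / 2) n + (v̂(0) (1 - ε) / (2 V)) n²` with `V = L^ν`. -/
theorem superstability_optimal_constants
    (ν : ℕ) (hν : 1 ≤ ν)
    (v : EuclideanSpace ℝ (Fin ν) → ℝ)
    (hv_cont : Continuous v)
    (hv_int : Integrable v)
    (m : Measure (EuclideanSpace ℝ (Fin ν))) [IsFiniteMeasure m]
    (hv_posType : ∀ x : EuclideanSpace ℝ (Fin ν),
      (v x : ℂ) = ∫ q, Complex.exp (Complex.I * ((inner ℝ q x : ℝ) : ℂ)) ∂m)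
    (hv0 : 0 < ∫ x, v x)
    (ε : ℝ) (hε : 0 < ε) :
    ∃ L₀ > (0 : ℝ), ∀ L : ℝ, L₀ ≤ L → ∀ n : ℕ, 2 ≤ n →
      ∀ x : Fin n → EuclideanSpace ℝ (Fin ν), (∀ i, x i ∈ cube ν L) →
        -(v 0 / 2) * n + ((∫ z, v z) * (1 - ε) / (2 * L ^ ν)) * n ^ 2 ≤
          ∑ i : Fin n, ∑ j : Fin n, if i < j then v (x i - x j) else 0 := by
  classical
  set w0 : ℝ := ∫ z, v z with hw0
  set I : ℝ := ∫ z, |v z| with hIdef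
  have hI0 : 0 ≤ I := integral_nonneg fun z => abs_nonneg _
  set η : ℝ := ε * w0 / 6 with hη
  have hη0 : 0 < η := by positivity
  obtain ⟨k, hk0, htail⟩ := tail_small v hv_int hη0
  have hgt : w0 * (1 - ε) < w0 - 3 * η := by rw [hη]; nlinarith
  have hlim : Filter.Tendsto
      (fun L : ℝ => (L^ν/(L+k)^ν) * (w0 - 3*η) - (L^ν/(L+k)^ν)*(1 - L^ν/(L+k)^ν)*I)
      Filter.atTop (nhds (w0 - 3*η)) := by
    have h1 := tendsto_ratio (ν := ν) k hk0
    have h2 := (h1.mul (tendsto_const_nhds (x := w0 - 3*η))).sub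
      ((h1.mul ((tendsto_const_nhds (x := (1:ℝ))).sub h1)).mul (tendsto_const_nhds (x := I)))
    have : (1:ℝ) * (w0 - 3*η) - 1 * (1 - 1) * I = w0 - 3*η := by ring
    rwa [this] at h2
  have hev := hlim.eventually (eventually_ge_nhds hgt)
  rw [Filter.eventually_atTop] at hev
  obtain ⟨L₁, hL₁⟩ := hev
  refine ⟨max L₁ 1, lt_of_lt_of_le one_pos (le_max_right _ _), ?_⟩
  intro L hL n hn x hx
  have hL1 : (1:ℝ) ≤ L := le_trans (le_max_right _ _) hL
  have hL0 : (0:ℝ) < L := lt_of_lt_of_le one_pos hL1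
  have hg := hL₁ L (le_trans (le_max_left _ _) hL)
  set Λ' : Set (EuclideanSpace ℝ (Fin ν)) := cube ν (L + k) with hΛ'
  set c : ℝ := n / (L+k)^ν with hc
  have hkey := posdef v hv_cont m hv_posType Λ' (cube_volume_ne_top _) n x c
  set V : ℝ := L ^ ν with hV
  set V' : ℝ := (L + k) ^ ν with hV'
  have hV0 : 0 < V := by positivity
  have hV'0 : 0 < V' := by rw [hV']; positivity
  have hVV' : V ≤ V' := by
    rw [hV, hV']
    exact pow_le_pow_left₀ (le_of_lt hL0) (by linarith) ν
  have hc0 : 0 ≤ c := by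
    rw [hc]
    exact div_nonneg (Nat.cast_nonneg n) (le_of_lt hV'0)
  set S : ℝ := ∑ i, ∑ j, v (x i - x j) with hS
  set T : ℝ := ∑ i, ∫ y in Λ', v (x i - y) with hT
  set DD : ℝ := ∫ a in Λ', ∫ b in Λ', v (a - b) with hDD
  -- cross bounds
  have hcross : ∀ z ∈ cube ν L, |(∫ y in Λ', v (z - y)) - w0| ≤ η := fun z hz =>
    le_trans (cross_bound v hv_int hz) htail
  have hTlb : (n:ℝ) * (w0 - η) ≤ T := by
    rw [hT]
    calc (n:ℝ)*(w0-η) = ∑ _i : Fin n, (w0 - η) := by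
          rw [Finset.sum_const, Finset.card_univ, Fintype.card_fin, nsmul_eq_mul]
    _ ≤ ∑ i, ∫ y in Λ', v (x i - y) := Finset.sum_le_sum fun i _ => by
        have h := abs_le.mp (hcross (x i) (hx i))
        linarith [h.1]
  -- DD bound
  haveI hfinΛ' : IsFiniteMeasure (volume.restrict Λ') := by
    constructor
    rw [Measure.restrict_apply_univ]
    exact lt_top_iff_ne_top.mpr (cube_volume_ne_top _)
  have hΛsub : cube ν L ⊆ Λ' := cube_mono (by linarith)
  have hWint : IntegrableOn (fun a => ∫ y in Λ', v (a - y)) Λ' volume := by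
    have hprod : Integrable (fun p : EuclideanSpace ℝ (Fin ν) × EuclideanSpace ℝ (Fin ν)
        => v (p.1 - p.2)) ((volume.restrict Λ').prod (volume.restrict Λ')) := by
      refine (integrable_const (v 0)).mono'
        ((hv_cont.comp (continuous_fst.sub continuous_snd)).aestronglyMeasurable)
        (Filter.Eventually.of_forall fun p => ?_)
      rw [Real.norm_eq_abs]
      exact v_bounded v m hv_posType _
    exact hprod.integral_prod_left
  have hWleI : ∀ a, (∫ y in Λ', v (a - y)) ≤ I := by
    intro a
    have h1 : |∫ y in Λ', v (a - y)| ≤ ∫ y in Λ', |v (a - y)| :=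
      norm_integral_le_integral_norm (fun y => v (a - y))
    have h2 : ∫ y in Λ', |v (a - y)| ≤ ∫ y, |v (a - y)| :=
      setIntegral_le_integral (hv_int.comp_sub_left a).abs
        (Filter.Eventually.of_forall fun y => abs_nonneg _)
    have h3 : ∫ y, |v (a - y)| = I := by
      rw [hIdef]
      exact integral_sub_left_eq_self (fun z => |v z|) volume a
    calc (∫ y in Λ', v (a - y)) ≤ |∫ y in Λ', v (a - y)| := le_abs_self _
    _ ≤ I := by linarith
  have hvolΛ : (volume (cube ν L)).toReal = V := by
    rw [cube_volume_toReal (le_of_lt hL0), hV]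
  have hvoldiff : (volume (Λ' \ cube ν L)).toReal = V' - V := by
    rw [hΛ', measure_diff hΛsub ((cube_meas _).nullMeasurableSet) (cube_volume_ne_top _)]
    rw [cube_volume, cube_volume]
    rw [ENNReal.toReal_sub_of_le
      (pow_le_pow_left' (ENNReal.ofReal_le_ofReal (by linarith)) ν) ?fin]
    case fin => exact (ENNReal.pow_lt_top ENNReal.ofReal_lt_top).ne
    rw [ENNReal.toReal_pow, ENNReal.toReal_pow, ENNReal.toReal_ofReal (by linarith),
      ENNReal.toReal_ofReal (le_of_lt hL0), hV, hV']
  have hDDsplit : DD = (∫ a in cube ν L, ∫ y in Λ', v (a - y))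
      + ∫ a in Λ' \ cube ν L, ∫ y in Λ', v (a - y) := by
    have hu := setIntegral_union (μ := volume) (f := fun a => ∫ y in Λ', v (a - y))
      (Set.disjoint_sdiff_right (s := cube ν L) (t := Λ'))
      (((cube_meas (L + k)).diff (cube_meas L)))
      (hWint.mono_set hΛsub) (hWint.mono_set Set.diff_subset)
    rw [Set.union_diff_cancel hΛsub] at hu
    rw [hDD, hu]
  have hbound1 : (∫ a in cube ν L, ∫ y in Λ', v (a - y)) ≤ V * (w0 + η) := by
    calc (∫ a in cube ν L, ∫ y in Λ', v (a - y))
        ≤ ∫ _a in cube ν L, (w0 + η) := by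
          refine setIntegral_mono_on (hWint.mono_set hΛsub)
            ((integrableOn_const_iff enorm_ne_top).mpr (Or.inr ?_)) (cube_meas _) (fun a ha => ?_)
          · exact lt_top_iff_ne_top.mpr (cube_volume_ne_top _)
          · have h := abs_le.mp (hcross a ha)
            linarith [h.2]
    _ = V * (w0 + η) := by rw [setIntegral_const, measureReal_def, smul_eq_mul, hvolΛ]
  have hbound2 : (∫ a in Λ' \ cube ν L, ∫ y in Λ', v (a - y)) ≤ (V' - V) * I := by
    calc (∫ a in Λ' \ cube ν L, ∫ y in Λ', v (a - y))
        ≤ ∫ _a in Λ' \ cube ν L, I := by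
          refine setIntegral_mono_on (hWint.mono_set Set.diff_subset)
            ((integrableOn_const_iff enorm_ne_top).mpr (Or.inr ?_)) ((cube_meas _).diff (cube_meas _))
            (fun a _ => hWleI a)
          exact lt_of_le_of_lt (measure_mono Set.diff_subset)
            (lt_top_iff_ne_top.mpr (cube_volume_ne_top _))
    _ = (V' - V) * I := by rw [setIntegral_const, measureReal_def, smul_eq_mul, hvoldiff]
  have hDDub : DD ≤ V * (w0 + η) + (V' - V) * I := by
    rw [hDDsplit]; exact add_le_add hbound1 hbound2
  -- final arithmetic
  have hS1 : 2*c*((n:ℝ)*(w0-η)) - c^2*(V*(w0+η)+(V'-V)*I) ≤ S := by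
    have e1 : 2*c*((n:ℝ)*(w0-η)) ≤ 2*c*T :=
      mul_le_mul_of_nonneg_left hTlb (by positivity)
    have e2 : c^2*DD ≤ c^2*(V*(w0+η)+(V'-V)*I) :=
      mul_le_mul_of_nonneg_left hDDub (sq_nonneg c)
    linarith [hkey]
  have hc' : c = n / V' := by rw [hc, hV']
  have hA : 2*c*((n:ℝ)*(w0-η)) - c^2*(V*(w0+η)+(V'-V)*I)
      = (n:ℝ)^2 * ((2*V'*(w0-η) - V*(w0+η) - (V'-V)*I)/V'^2) := by
    rw [hc']
    field_simp
    ring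
  have hB : w0*(1-ε)/V ≤ (2*V'*(w0-η) - V*(w0+η) - (V'-V)*I)/V'^2 := by
    rw [div_le_div_iff₀ hV0 (by positivity)]
    have hg' : w0*(1-ε)*V'^2 ≤ (V/V'*(w0-3*η) - V/V'*(1-V/V')*I)*V'^2 :=
      mul_le_mul_of_nonneg_right hg (by positivity)
    have hid : (V/V'*(w0-3*η) - V/V'*(1-V/V')*I)*V'^2 = V*V'*(w0-3*η) - V*(V'-V)*I := by
      field_simp
    have hpos : 0 ≤ V*(V'-V)*(w0+η) := by
      apply mul_nonneg (mul_nonneg (le_of_lt hV0) (by linarith)) (by positivity)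
    have hident : (2*V'*(w0-η) - V*(w0+η) - (V'-V)*I)*V
        = (V*V'*(w0-3*η) - V*(V'-V)*I) + V*(V'-V)*(w0+η) := by ring
    linarith
  have hSfin : w0*(1-ε)/V*(n:ℝ)^2 ≤ S := by
    calc w0*(1-ε)/V*(n:ℝ)^2 = (n:ℝ)^2 * (w0*(1-ε)/V) := by ring
    _ ≤ (n:ℝ)^2 * ((2*V'*(w0-η) - V*(w0+η) - (V'-V)*I)/V'^2) :=
        mul_le_mul_of_nonneg_left hB (sq_nonneg _)
    _ = 2*c*((n:ℝ)*(w0-η)) - c^2*(V*(w0+η)+(V'-V)*I) := hA.symm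
    _ ≤ S := hS1
  have hsplit := sum_split x v (v_even v m hv_posType)
  rw [← hS] at hsplit
  have hhalf : w0 * (1 - ε) / (2 * V) * (n:ℝ)^2 = (w0*(1-ε)/V*(n:ℝ)^2)/2 := by ring
  linarith [hSfin, hsplit]
end

section
/- For any cube Λ = [−L/2, L/2]^ν, any h > 0, and any points x₁, …, xₙ ∈ Λ, if the denominator D := ∫_{B(Λ,h)} A_Λ^h(y) dy is strictly positive, then ∑_{i,j = 1}^{n} v(x_i − x_j) ≥ ( ∑_{i=1}^{n} A_Λ^h(x_i) )² / D. -/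
open MeasureTheory
open scoped ComplexConjugate

/-- The enlarged region `B(Λ, h) = {x : dist(x, Λ) ≤ h}`. -/
def B (ν : ℕ) (L h : ℝ) : Set (EuclideanSpace ℝ (Fin ν)) :=
  Metric.cthickening h (cube ν L)

/-- `A_Λ^h(y) = ∫_{B(Λ,h)} v(x - y) dx`. -/
noncomputable def A {ν : ℕ} (v : EuclideanSpace ℝ (Fin ν) → ℝ) (L h : ℝ)
    (y : EuclideanSpace ℝ (Fin ν)) : ℝ :=
  ∫ x in B ν L h, v (x - y)

namespace CSaux
variable {ν : ℕ}

noncomputable def ek (q y : EuclideanSpace ℝ (Fin ν)) : ℂ :=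
  Complex.exp (Complex.I * ((inner ℝ q y : ℝ) : ℂ))

lemma ek_norm (q y : EuclideanSpace ℝ (Fin ν)) : ‖ek q y‖ = 1 := by
  simp [ek, Complex.norm_exp]

lemma ek_cont : Continuous
    (fun p : (EuclideanSpace ℝ (Fin ν)) × (EuclideanSpace ℝ (Fin ν)) => ek p.1 p.2) :=
  Complex.continuous_exp.comp
    (continuous_const.mul (Complex.continuous_ofReal.comp continuous_inner))

lemma ek_cont_left (y : EuclideanSpace ℝ (Fin ν)) : Continuous (fun q => ek q y) :=
  Complex.continuous_exp.comp (continuous_const.mul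
    (Complex.continuous_ofReal.comp (continuous_id.inner continuous_const)))

lemma ek_cont_right (q : EuclideanSpace ℝ (Fin ν)) : Continuous (fun y => ek q y) :=
  Complex.continuous_exp.comp (continuous_const.mul
    (Complex.continuous_ofReal.comp (continuous_const.inner continuous_id)))

lemma ek_sub (q a b : EuclideanSpace ℝ (Fin ν)) :
    ek q (a - b) = ek q a * conj (ek q b) := by
  rw [ek, ek, ek, ← Complex.exp_conj, ← Complex.exp_add]
  congr 1
  rw [inner_sub_right]
  push_cast
  rw [map_mul, Complex.conj_I, Complex.conj_ofReal]
  ring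

lemma cube_isBounded (L : ℝ) : Bornology.IsBounded (cube ν L) := by
  refine (Metric.isBounded_closedBall (x := 0) (r := Real.sqrt (ν * (L/2)^2))).subset ?_
  intro y hy
  rw [Metric.mem_closedBall, dist_zero_right, EuclideanSpace.norm_eq]
  apply Real.sqrt_le_sqrt
  calc ∑ i, ‖y i‖ ^ 2 ≤ ∑ _i : Fin ν, (L/2)^2 :=
        Finset.sum_le_sum fun i _ => by
          have := hy i
          rw [Real.norm_eq_abs]
          exact pow_le_pow_left₀ (abs_nonneg _) this 2
    _ = ν * (L/2)^2 := by simp [Finset.sum_const, mul_comm]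

lemma B_fin (L h : ℝ) : volume (B ν L h) < ⊤ :=
  ((cube_isBounded L).cthickening).measure_lt_top

lemma restrict_fin (L h : ℝ) :
    IsFiniteMeasure (volume.restrict (B (ν := ν) L h)) :=
  ⟨by rw [Measure.restrict_apply_univ]; exact B_fin L h⟩

noncomputable def G (ν : ℕ) (L h : ℝ) (q : EuclideanSpace ℝ (Fin ν)) : ℂ :=
  ∫ x in B ν L h, ek q x

lemma G_cont (L h : ℝ) : Continuous (G ν L h) := by
  haveI := restrict_fin (ν := ν) L h
  refine continuous_of_dominated (bound := fun _ => (1:ℝ))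
    (fun q => (ek_cont_right q).aestronglyMeasurable) ?_ (integrable_const 1) ?_
  · exact fun q => ae_of_all _ fun x => (ek_norm q x).le
  · exact ae_of_all _ fun x => ek_cont_left x

lemma G_norm_le (L h : ℝ) (q : EuclideanSpace ℝ (Fin ν)) :
    ‖G ν L h q‖ ≤ (volume (B ν L h)).toReal := by
  haveI := restrict_fin (ν := ν) L h
  calc ‖G ν L h q‖ ≤ 1 * ((volume.restrict (B ν L h)) Set.univ).toReal :=
        norm_integral_le_of_norm_le_const (ae_of_all _ fun x => (ek_norm q x).le)
    _ = (volume (B ν L h)).toReal := by rw [Measure.restrict_apply_univ, one_mul]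

lemma bdd_integrable {X : Type*} [MeasurableSpace X] {μ : Measure X} [IsFiniteMeasure μ]
    {f : X → ℂ} (hf : AEStronglyMeasurable f μ) {C : ℝ} (hC : ∀ x, ‖f x‖ ≤ C) :
    Integrable f μ :=
  (integrable_const C).mono' hf (ae_of_all _ hC)

end CSaux

/-- For a cube `Λ = [-L/2, L/2]^ν`, `h > 0` and points `x₁, …, xₙ ∈ Λ`, if the
denominator `D = ∫_{B(Λ,h)} A_Λ^h(y) dy` is strictly positive, then
`∑_{i,j=1}^n v(xᵢ - xⱼ) ≥ (∑ᵢ A_Λ^h(xᵢ))² / D`. -/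
theorem cauchy_schwarz_sum_lower_bound
    (ν : ℕ) (hν : 1 ≤ ν)
    (v : EuclideanSpace ℝ (Fin ν) → ℝ)
    (hv_cont : Continuous v)
    (hv_int : Integrable v)
    (m : Measure (EuclideanSpace ℝ (Fin ν))) [IsFiniteMeasure m]
    (hv_posType : ∀ x : EuclideanSpace ℝ (Fin ν),
      (v x : ℂ) = ∫ q, Complex.exp (Complex.I * ((inner ℝ q x : ℝ) : ℂ)) ∂m)
    (L h : ℝ) (hL : 0 < L) (hh : 0 < h)
    (n : ℕ) (x : Fin n → EuclideanSpace ℝ (Fin ν)) (hx : ∀ i, x i ∈ cube ν L)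
    (hD : 0 < ∫ y in B ν L h, A v L h y) :
    (∑ i : Fin n, A v L h (x i)) ^ 2 / (∫ y in B ν L h, A v L h y) ≤
      ∑ i : Fin n, ∑ j : Fin n, v (x i - x j) := by
  classical
  haveI hfin : IsFiniteMeasure (volume.restrict (B ν L h)) := CSaux.restrict_fin L h
  set volB : ℝ := (volume (B ν L h)).toReal with hvolB
  -- basic integrability over m
  have hek_int : ∀ z, Integrable (fun q => CSaux.ek q z) m := fun z =>
    CSaux.bdd_integrable (CSaux.ek_cont_left z).aestronglyMeasurable
      (fun q => (CSaux.ek_norm q z).le)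
  have hv_eq : ∀ z, ((v z : ℝ) : ℂ) = ∫ q, CSaux.ek q z ∂m := fun z => hv_posType z
  -- key representation of A
  have hA : ∀ y, ((A v L h y : ℝ) : ℂ) = ∫ q, CSaux.G ν L h q * conj (CSaux.ek q y) ∂m := by
    intro y
    have h1 : ((A v L h y : ℝ) : ℂ) = ∫ xx in B ν L h, ((v (xx - y) : ℝ) : ℂ) := by
      rw [A]; exact (integral_ofReal (𝕜 := ℂ)).symm
    rw [h1]
    simp_rw [hv_eq]
    have hswap : Integrable
        (Function.uncurry fun (xx q : EuclideanSpace ℝ (Fin ν)) => CSaux.ek q (xx - y))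
        ((volume.restrict (B ν L h)).prod m) := by
      refine CSaux.bdd_integrable ?_ (C := 1) ?_
      · exact (Complex.continuous_exp.comp (continuous_const.mul
          (Complex.continuous_ofReal.comp
            (continuous_snd.inner (continuous_fst.sub continuous_const))))).aestronglyMeasurable
      · intro p; exact (CSaux.ek_norm _ _).le
    rw [MeasureTheory.integral_integral_swap hswap]
    congr 1
    funext q
    simp_rw [CSaux.ek_sub]
    rw [integral_mul_const]
    rfl
  -- representation of D
  have hDc : ((∫ y in B ν L h, A v L h y : ℝ) : ℂ)
      = ∫ q, CSaux.G ν L h q * conj (CSaux.G ν L h q) ∂m := by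
    have h1 : ((∫ y in B ν L h, A v L h y : ℝ) : ℂ)
        = ∫ y in B ν L h, ((A v L h y : ℝ) : ℂ) := (integral_ofReal (𝕜 := ℂ)).symm
    rw [h1]
    simp_rw [hA]
    have hswap : Integrable
        (Function.uncurry fun (yy q : EuclideanSpace ℝ (Fin ν)) =>
          CSaux.G ν L h q * conj (CSaux.ek q yy))
        ((volume.restrict (B ν L h)).prod m) := by
      refine CSaux.bdd_integrable ?_ (C := volB) ?_
      · exact (((CSaux.G_cont L h).comp continuous_snd).mul
          (Complex.continuous_conj.comp (CSaux.ek_cont.comp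
            (continuous_snd.prodMk continuous_fst)))).aestronglyMeasurable
      · intro p
        rw [Function.uncurry, norm_mul, RCLike.norm_conj, CSaux.ek_norm, mul_one]
        exact CSaux.G_norm_le L h _
    rw [MeasureTheory.integral_integral_swap hswap]
    congr 1
    funext q
    rw [MeasureTheory.integral_const_mul, integral_conj]
    rfl
  -- the sum of exponentials
  set P : EuclideanSpace ℝ (Fin ν) → ℂ := fun q => ∑ i, CSaux.ek q (x i) with hP
  have hP_cont : Continuous P := continuous_finset_sum _ fun i _ => CSaux.ek_cont_left (x i)
  have hP_bd : ∀ q, ‖P q‖ ≤ (n : ℝ) := by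
    intro q
    calc ‖P q‖ ≤ ∑ i, ‖CSaux.ek q (x i)‖ := norm_sum_le _ _
      _ = (n : ℝ) := by
          rw [Finset.sum_congr rfl fun i _ => CSaux.ek_norm q (x i)]
          simp
  -- representation of T
  have hT : ((∑ i, ∑ j, v (x i - x j) : ℝ) : ℂ) = ∫ q, P q * conj (P q) ∂m := by
    have hexp : ∀ q, P q * conj (P q) = ∑ i, ∑ j, CSaux.ek q (x i - x j) := by
      intro q
      rw [hP]
      simp only [map_sum, Finset.sum_mul_sum]
      simp_rw [CSaux.ek_sub]
    simp_rw [hexp]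
    rw [integral_finset_sum _ (fun i _ => integrable_finset_sum _ fun j _ => hek_int _)]
    have : ∀ i : Fin n, ∫ q, ∑ j, CSaux.ek q (x i - x j) ∂m
        = ∑ j, ((v (x i - x j) : ℝ) : ℂ) := by
      intro i
      rw [integral_finset_sum _ (fun j _ => hek_int _)]
      exact Finset.sum_congr rfl fun j _ => (hv_eq _).symm
    simp_rw [this]
    push_cast
    rfl
  -- representation of S
  have hGe_int : ∀ z, Integrable (fun q => CSaux.G ν L h q * conj (CSaux.ek q z)) m := by
    intro z
    refine CSaux.bdd_integrable ?_ (C := volB) ?_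
    · exact ((CSaux.G_cont L h).mul
        (Complex.continuous_conj.comp (CSaux.ek_cont_left z))).aestronglyMeasurable
    · intro q
      rw [norm_mul, RCLike.norm_conj, CSaux.ek_norm, mul_one]
      exact CSaux.G_norm_le L h _
  have hS : ((∑ i, A v L h (x i) : ℝ) : ℂ) = ∫ q, CSaux.G ν L h q * conj (P q) ∂m := by
    have hexp : ∀ q, CSaux.G ν L h q * conj (P q)
        = ∑ i, CSaux.G ν L h q * conj (CSaux.ek q (x i)) := by
      intro q
      rw [hP]
      simp only [map_sum, Finset.mul_sum]
    simp_rw [hexp]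
    rw [integral_finset_sum _ (fun i _ => hGe_int _)]
    simp_rw [← hA]
    push_cast
    rfl
  -- abbreviations
  set S : ℝ := ∑ i, A v L h (x i) with hSdef
  set D : ℝ := ∫ y in B ν L h, A v L h y with hDdef
  set T : ℝ := ∑ i, ∑ j, v (x i - x j) with hTdef
  set c : ℝ := -S / D with hc
  set F : EuclideanSpace ℝ (Fin ν) → ℂ :=
    fun q => P q + (c : ℂ) * CSaux.G ν L h q with hF
  have hDne : D ≠ 0 := ne_of_gt hD
  -- integrabilities
  have iPP : Integrable (fun q => P q * conj (P q)) m := by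
    refine CSaux.bdd_integrable ?_ (C := (n : ℝ) * n) ?_
    · exact (hP_cont.mul (Complex.continuous_conj.comp hP_cont)).aestronglyMeasurable
    · intro q
      rw [norm_mul, RCLike.norm_conj]
      exact mul_le_mul (hP_bd q) (hP_bd q) (norm_nonneg _) (Nat.cast_nonneg n)
  have iGP : Integrable (fun q => CSaux.G ν L h q * conj (P q)) m := by
    refine CSaux.bdd_integrable ?_ (C := volB * n) ?_
    · exact ((CSaux.G_cont L h).mul
        (Complex.continuous_conj.comp hP_cont)).aestronglyMeasurable
    · intro q
      rw [norm_mul, RCLike.norm_conj]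
      exact mul_le_mul (CSaux.G_norm_le L h q) (hP_bd q) (norm_nonneg _) ENNReal.toReal_nonneg
  have iPG : Integrable (fun q => P q * conj (CSaux.G ν L h q)) m := by
    refine CSaux.bdd_integrable ?_ (C := (n : ℝ) * volB) ?_
    · exact (hP_cont.mul
        (Complex.continuous_conj.comp (CSaux.G_cont L h))).aestronglyMeasurable
    · intro q
      rw [norm_mul, RCLike.norm_conj]
      exact mul_le_mul (hP_bd q) (CSaux.G_norm_le L h q) (norm_nonneg _) (Nat.cast_nonneg n)
  have iGG : Integrable (fun q => CSaux.G ν L h q * conj (CSaux.G ν L h q)) m := by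
    refine CSaux.bdd_integrable ?_ (C := volB * volB) ?_
    · exact ((CSaux.G_cont L h).mul
        (Complex.continuous_conj.comp (CSaux.G_cont L h))).aestronglyMeasurable
    · intro q
      rw [norm_mul, RCLike.norm_conj]
      exact mul_le_mul (CSaux.G_norm_le L h q) (CSaux.G_norm_le L h q) (norm_nonneg _)
        ENNReal.toReal_nonneg
  -- representation of the cross term P * conj G
  have hPG : ((S : ℝ) : ℂ) = ∫ q, P q * conj (CSaux.G ν L h q) ∂m := by
    have hconj : ∀ q, P q * conj (CSaux.G ν L h q)
        = conj (CSaux.G ν L h q * conj (P q)) := by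
      intro q
      rw [map_mul, Complex.conj_conj]
      ring
    simp_rw [hconj]
    rw [integral_conj, ← hS, Complex.conj_ofReal]
  -- expansion of |F|^2
  have hexpand : ∀ q, F q * conj (F q) =
      P q * conj (P q) + ((c : ℂ) * (CSaux.G ν L h q * conj (P q))
        + ((c : ℂ) * (P q * conj (CSaux.G ν L h q))
        + (c : ℂ)^2 * (CSaux.G ν L h q * conj (CSaux.G ν L h q)))) := by
    intro q
    simp only [hF, map_add, map_mul, Complex.conj_ofReal]
    ring
  have i2 : Integrable (fun q => (c : ℂ) * (P q * conj (CSaux.G ν L h q))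
      + (c : ℂ)^2 * (CSaux.G ν L h q * conj (CSaux.G ν L h q))) m :=
    (iPG.const_mul _).add (iGG.const_mul _)
  have i1 : Integrable (fun q => (c : ℂ) * (CSaux.G ν L h q * conj (P q))
      + ((c : ℂ) * (P q * conj (CSaux.G ν L h q))
        + (c : ℂ)^2 * (CSaux.G ν L h q * conj (CSaux.G ν L h q)))) m :=
    (iGP.const_mul _).add i2
  have key : ((T + 2*c*S + c^2*D : ℝ) : ℂ) = ∫ q, F q * conj (F q) ∂m := by
    simp_rw [hexpand]
    rw [integral_add iPP i1,
      integral_add (iGP.const_mul _) i2,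
      integral_add (iPG.const_mul _) (iGG.const_mul _),
      MeasureTheory.integral_const_mul, MeasureTheory.integral_const_mul,
      MeasureTheory.integral_const_mul, ← hT, ← hS, ← hPG, ← hDc]
    push_cast
    ring
  have hreal : 0 ≤ T + 2*c*S + c^2*D := by
    have h1 : ((T + 2*c*S + c^2*D : ℝ) : ℂ)
        = ((∫ q, Complex.normSq (F q) ∂m : ℝ) : ℂ) := by
      rw [key]
      simp_rw [Complex.mul_conj]
      exact integral_ofReal (𝕜 := ℂ)
    have h2 : T + 2*c*S + c^2*D = ∫ q, Complex.normSq (F q) ∂m := by exact_mod_cast h1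
    rw [h2]
    exact integral_nonneg fun q => Complex.normSq_nonneg _
  -- conclusion
  have hcD : c * D = -S := by
    rw [hc]; field_simp
  rw [div_le_iff₀ hD]
  nlinarith [mul_nonneg hreal hD.le, hcD, sq_nonneg (c * D + S)]
end

section
/- Optimality of the superstability constant: suppose A ∈ ℝ and B ≥ 0 are such that for some L₀ > 0, for every cube Λ = [−L/2, L/2]^ν with side L ≥ L₀ (volume V = L^ν), every integer n ≥ 2 and every choice of points x₁, …, xₙ ∈ Λ, one has ∑_{1 ≤ i < j ≤ n} v(x_i − x_j) ≥ (A/(2V))·n² − B·n. Then necessarily A ≤ v̂(0). -/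
open MeasureTheory

lemma cube_eq_pi (ν : ℕ) (L : ℝ) :
    cube ν L = ((MeasurableEquiv.toLp 2 (Fin ν → ℝ)).symm) ⁻¹'
      (Set.univ.pi fun _ => Set.Icc (-(L/2)) (L/2)) := by
  ext y
  simp only [cube, Set.mem_setOf_eq, Set.mem_preimage, Set.mem_pi, Set.mem_univ,
    forall_true_left, Set.mem_Icc, abs_le]
  rfl

lemma cube_measurable (ν : ℕ) (L : ℝ) : MeasurableSet (cube ν L) := by
  rw [cube_eq_pi]
  exact (MeasurableSet.univ_pi fun _ => measurableSet_Icc).preimage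
    ((MeasurableEquiv.toLp 2 (Fin ν → ℝ)).symm).measurable

lemma volume_cube (ν : ℕ) (L : ℝ) :
    volume (cube ν L) = ENNReal.ofReal L ^ ν := by
  rw [cube_eq_pi,
    (EuclideanSpace.volume_preserving_symm_measurableEquiv_toLp (Fin ν)).measure_preimage
      ((MeasurableSet.univ_pi fun _ => measurableSet_Icc).nullMeasurableSet),
    volume_pi_pi]
  simp only [Real.volume_Icc, Finset.prod_const, Finset.card_univ, Fintype.card_fin]
  congr 1
  ring

noncomputable def wt (ν : ℕ) (L : ℝ) (z : EuclideanSpace ℝ (Fin ν)) : ℝ :=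
  ∏ i, max (L - |z i|) 0

lemma wt_nonneg (ν : ℕ) (L : ℝ) (z : EuclideanSpace ℝ (Fin ν)) : 0 ≤ wt ν L z :=
  Finset.prod_nonneg fun _ _ => le_max_right _ _

lemma wt_le (ν : ℕ) (L : ℝ) (hL : 0 ≤ L) (z : EuclideanSpace ℝ (Fin ν)) :
    wt ν L z ≤ L ^ ν := by
  have : (L : ℝ) ^ ν = ∏ _i : Fin ν, L := by simp
  rw [this, wt]
  refine Finset.prod_le_prod (fun _ _ => le_max_right _ _) fun i _ => ?_
  exact max_le (by linarith [abs_nonneg (z i)]) hL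

lemma wt_continuous (ν : ℕ) (L : ℝ) : Continuous (wt ν L) := by
  refine continuous_finset_prod _ fun i _ => ?_
  exact ((continuous_const.sub (by fun_prop : Continuous fun z : EuclideanSpace ℝ (Fin ν) => z i).abs)).max continuous_const

lemma overlap_volume (ν : ℕ) (L : ℝ) (z : EuclideanSpace ℝ (Fin ν)) :
    volume {x | x ∈ cube ν L ∧ x - z ∈ cube ν L} = ENNReal.ofReal (wt ν L z) := by
  have hset : {x : EuclideanSpace ℝ (Fin ν) | x ∈ cube ν L ∧ x - z ∈ cube ν L} =
      ((MeasurableEquiv.toLp 2 (Fin ν → ℝ)).symm) ⁻¹'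
        (Set.univ.pi fun i => Set.Icc (max (-(L/2)) (z i - L/2)) (min (L/2) (z i + L/2))) := by
    ext x
    simp only [Set.mem_setOf_eq, cube, Set.mem_preimage, Set.mem_pi, Set.mem_univ,
      forall_true_left, Set.mem_Icc]
    have hcoe : ∀ k, ((MeasurableEquiv.toLp 2 (Fin ν → ℝ)).symm) x k = x k := fun _ => rfl
    simp only [hcoe]
    constructor
    · rintro ⟨h1, h2⟩ i
      have e1 := abs_le.1 (h1 i)
      have e2 := abs_le.1 (h2 i)
      have : (x - z) i = x i - z i := rfl
      rw [this] at e2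
      exact ⟨max_le (by linarith [e1.1]) (by linarith [e2.1]),
        le_min (by linarith [e1.2]) (by linarith [e2.2])⟩
    · intro h
      constructor
      · intro i
        have := h i
        rw [abs_le]
        constructor
        · exact le_trans (le_max_left _ _) this.1
        · exact le_trans this.2 (min_le_left _ _)
      · intro i
        have := h i
        have hxz : (x - z) i = x i - z i := rfl
        rw [hxz, abs_le]
        constructor
        · have := le_trans (le_max_right _ _) this.1; linarith
        · have := le_trans this.2 (min_le_right _ _); linarith
  rw [hset,
    (EuclideanSpace.volume_preserving_symm_measurableEquiv_toLp (Fin ν)).measure_preimage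
      ((MeasurableSet.univ_pi fun _ => measurableSet_Icc).nullMeasurableSet),
    volume_pi_pi]
  rw [wt, ENNReal.ofReal_prod_of_nonneg (fun i _ => le_max_right _ _)]
  have key : ∀ i : Fin ν, min (L/2) (z i + L/2) - max (-(L/2)) (z i - L/2) = L - |z i| := by
    intro i
    rcases le_or_gt 0 (z i) with h|h
    · rw [abs_of_nonneg h, min_eq_left (by linarith), max_eq_right (by linarith)]; ring
    · rw [abs_of_neg h, min_eq_right (by linarith), max_eq_left (by linarith)]; ring
  congr 1
  ext i
  rw [Real.volume_Icc, key i]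
  rcases le_or_gt 0 (L - |z i|) with h|h
  · rw [max_eq_left h]
  · rw [max_eq_right h.le, ENNReal.ofReal_of_nonpos h.le, ENNReal.ofReal_zero]

lemma pi_map_pair {α : Type*} [MeasurableSpace α] (μ : Measure α) [IsProbabilityMeasure μ]
    {n : ℕ} (i j : Fin n) (hij : i ≠ j) :
    (Measure.pi fun _ : Fin n => μ).map (fun x => (x i, x j)) = μ.prod μ := by
  refine (Measure.prod_eq fun s t hs ht => ?_).symm
  rw [Measure.map_apply ((measurable_pi_apply i).prodMk (measurable_pi_apply j)) (hs.prod ht)]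
  have hset : (fun x : Fin n → α => (x i, x j)) ⁻¹' s ×ˢ t =
      Set.univ.pi (fun k => if k = i then s else if k = j then t else Set.univ) := by
    ext x
    simp only [Set.mem_preimage, Set.mem_prod, Set.mem_pi, Set.mem_univ, forall_true_left]
    constructor
    · rintro ⟨h1, h2⟩ k
      by_cases hk : k = i
      · subst hk; simp [h1]
      · by_cases hk' : k = j
        · subst hk'; simp [hk, h2]
        · simp [hk, hk']
    · intro h
      refine ⟨?_, ?_⟩
      · have := h i; simpa using this
      · have := h j; simpa [Ne.symm hij] using this
  rw [hset, Measure.pi_pi]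
  have : ∀ k : Fin n, μ (if k = i then s else if k = j then t else Set.univ) =
      if k = i then μ s else if k = j then μ t else 1 := fun k => by
    split_ifs <;> simp
  simp only [this]
  rw [← Finset.prod_subset (Finset.subset_univ ({i, j} : Finset (Fin n)))
    (fun k _ hk => by
      simp only [Finset.mem_insert, Finset.mem_singleton, not_or] at hk
      simp [hk.1, hk.2]),
    Finset.prod_pair hij]
  simp [Ne.symm hij]

lemma claimK (ν : ℕ) (v : EuclideanSpace ℝ (Fin ν) → ℝ) (hv_cont : Continuous v)
    (hv_int : Integrable v) (C : ℝ) (hC : ∀ x, |v x| ≤ C) (L : ℝ) :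
    ∫ p, v (p.1 - p.2)
        ∂((volume.restrict (cube ν L)).prod (volume.restrict (cube ν L))) =
      ∫ z, v z * wt ν L z := by
  set Λ := cube ν L with hΛ
  have hΛm : MeasurableSet Λ := cube_measurable ν L
  haveI : IsFiniteMeasure (volume.restrict Λ) := by
    constructor
    rw [Measure.restrict_apply_univ, volume_cube]
    exact ENNReal.pow_lt_top ENNReal.ofReal_lt_top
  have hint : Integrable (fun p : EuclideanSpace ℝ (Fin ν) × EuclideanSpace ℝ (Fin ν) =>
      v (p.1 - p.2)) ((volume.restrict Λ).prod (volume.restrict Λ)) := by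
    refine (integrable_const C).mono'
      ((hv_cont.comp (continuous_fst.sub continuous_snd)).aestronglyMeasurable) ?_
    exact ae_of_all _ fun p => by simpa using hC _
  rw [integral_prod _ hint]
  have inner_eq : ∀ x : EuclideanSpace ℝ (Fin ν),
      ∫ y, v (x - y) ∂(volume.restrict Λ) =
        ∫ z, Λ.indicator (fun _ => (1:ℝ)) (x - z) * v z := by
    intro x
    rw [← integral_indicator hΛm]
    rw [← integral_sub_left_eq_self (fun y => Λ.indicator (fun y => v (x - y)) y) volume x]
    refine integral_congr_ae (ae_of_all _ fun z => ?_)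
    by_cases h : x - z ∈ Λ
    · simp [Set.indicator_of_mem h, sub_sub_cancel]
    · simp [Set.indicator_of_notMem h]
  simp_rw [inner_eq]
  have hswap : Integrable
      (Function.uncurry fun x z => Λ.indicator (fun _ => (1:ℝ)) (x - z) * v z)
      ((volume.restrict Λ).prod volume) := by
    refine Integrable.mono' ((integrable_const (1:ℝ)).mul_prod hv_int.abs) ?_ ?_
    · exact (((measurable_const.indicator hΛm).comp
        (measurable_fst.sub measurable_snd)).mul
        (hv_cont.measurable.comp measurable_snd)).aestronglyMeasurable
    · refine ae_of_all _ fun p => ?_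
      simp only [Function.uncurry, norm_mul, one_mul]
      have h1 : ‖Λ.indicator (fun _ => (1:ℝ)) (p.1 - p.2)‖ ≤ 1 := by
        by_cases h : p.1 - p.2 ∈ Λ <;> simp [Set.indicator_of_mem, Set.indicator_of_notMem, h]
      calc ‖Λ.indicator (fun _ => (1:ℝ)) (p.1 - p.2)‖ * ‖v p.2‖
          ≤ 1 * ‖v p.2‖ := by gcongr
        _ = |v p.2| := by simp
  rw [integral_integral_swap hswap]
  refine integral_congr_ae (ae_of_all _ fun z => ?_)
  have hT : MeasurableSet ((fun x => x - z) ⁻¹' Λ) :=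
    hΛm.preimage (measurable_id.sub measurable_const)
  have step : ∀ x : EuclideanSpace ℝ (Fin ν),
      Λ.indicator (fun _ => (1:ℝ)) (x - z) =
        ((fun x => x - z) ⁻¹' Λ).indicator (fun _ => (1:ℝ)) x := fun x => by
    by_cases h : x - z ∈ Λ
    · simp [Set.indicator, h]
    · simp [Set.indicator, h]
  calc ∫ x, Λ.indicator (fun _ => (1:ℝ)) (x - z) * v z ∂(volume.restrict Λ)
      = (∫ x, Λ.indicator (fun _ => (1:ℝ)) (x - z) ∂(volume.restrict Λ)) * v z :=
        integral_mul_const _ _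
    _ = (∫ x in Λ, ((fun x => x - z) ⁻¹' Λ).indicator (fun _ => (1:ℝ)) x) * v z := by
        simp_rw [step]
    _ = (∫ x in Λ ∩ ((fun x => x - z) ⁻¹' Λ), (1:ℝ)) * v z := by
        rw [setIntegral_indicator hT]
    _ = (volume {x | x ∈ Λ ∧ x - z ∈ Λ}).toReal * v z := by
        rw [setIntegral_const, smul_eq_mul, mul_one]
        have : Λ ∩ (fun x => x - z) ⁻¹' Λ = {x | x ∈ Λ ∧ x - z ∈ Λ} := rfl
        rw [this, measureReal_def]
    _ = v z * wt ν L z := by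
        rw [overlap_volume ν L z, ENNReal.toReal_ofReal (wt_nonneg ν L z), mul_comm]

lemma count_pairs (n : ℕ) (T : ℝ) :
    (∑ i : Fin n, ∑ j : Fin n, if i < j then T else 0) = ((n^2 - n : ℝ)/2) * T := by
  have key : (∑ i : Fin n, ∑ j : Fin n, if i < j then (1:ℝ) else 0) = ((n^2 - n : ℝ)/2) := by
    have tri : ∀ i j : Fin n,
        (if i < j then (1:ℝ) else 0) + ((if j < i then (1:ℝ) else 0) +
          (if i = j then (1:ℝ) else 0)) = 1 := by
      intro i j
      rcases lt_trichotomy i j with h | h | h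
      · simp [h, asymm h, ne_of_lt h]
      · simp [h, lt_irrefl]
      · simp [h, asymm h, (ne_of_lt h).symm]
    have h1 : (∑ i : Fin n, ∑ j : Fin n,
        ((if i < j then (1:ℝ) else 0) + ((if j < i then (1:ℝ) else 0) +
          (if i = j then (1:ℝ) else 0)))) = (n:ℝ)^2 := by
      simp only [tri]
      simp [sq]
    simp only [Finset.sum_add_distrib] at h1
    have h2 : (∑ i : Fin n, ∑ j : Fin n, if j < i then (1:ℝ) else 0)
        = ∑ i : Fin n, ∑ j : Fin n, if i < j then (1:ℝ) else 0 := Finset.sum_comm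
    have h3 : (∑ i : Fin n, ∑ j : Fin n, if i = j then (1:ℝ) else 0) = n := by
      simp [Finset.sum_ite_eq]
    rw [h2, h3] at h1
    linarith
  calc (∑ i : Fin n, ∑ j : Fin n, if i < j then T else 0)
      = ∑ i : Fin n, ∑ j : Fin n, T * (if i < j then (1:ℝ) else 0) := by
        refine Finset.sum_congr rfl fun i _ => Finset.sum_congr rfl fun j _ => ?_
        split_ifs <;> ring
    _ = T * ∑ i : Fin n, ∑ j : Fin n, (if i < j then (1:ℝ) else 0) := by
        rw [Finset.mul_sum]
        exact Finset.sum_congr rfl fun i _ => (Finset.mul_sum _ _ _).symm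
    _ = ((n^2 - n : ℝ)/2) * T := by rw [key]; ring

lemma prod_smul_prod {α β : Type*} [MeasurableSpace α] [MeasurableSpace β]
    (μ : Measure α) (ν : Measure β) (c : ENNReal)
    [SigmaFinite (c • μ)] [SigmaFinite (c • ν)] [SigmaFinite μ] [SigmaFinite ν] :
    (c • μ).prod (c • ν) = (c * c) • (μ.prod ν) := by
  refine (Measure.prod_eq (μ := c • μ) (ν := c • ν) (μν := (c * c) • μ.prod ν) fun s t hs ht => ?_)
  simp only [Measure.smul_apply, Measure.prod_prod, smul_eq_mul]
  ring

lemma step_fixed (ν : ℕ) (v : EuclideanSpace ℝ (Fin ν) → ℝ)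
    (hv_cont : Continuous v) (hv_int : Integrable v)
    (C : ℝ) (hC : ∀ x, |v x| ≤ C)
    (A B : ℝ) (L : ℝ) (hL : 0 < L)
    (hsup : ∀ n : ℕ, 2 ≤ n → ∀ x : Fin n → EuclideanSpace ℝ (Fin ν),
      (∀ i, x i ∈ cube ν L) →
        (A / (2 * L ^ ν)) * n ^ 2 - B * n ≤
          ∑ i : Fin n, ∑ j : Fin n, if i < j then v (x i - x j) else 0) :
    A ≤ (∫ z, v z * wt ν L z) * (L ^ ν)⁻¹ := by
  have hV : (0:ℝ) < L ^ ν := pow_pos hL ν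
  set c : ENNReal := ENNReal.ofReal (L ^ ν) with hc
  have hc0 : c ≠ 0 := by
    simp [hc, ENNReal.ofReal_eq_zero, not_le, hV]
  have hctop : c ≠ ⊤ := ENNReal.ofReal_ne_top
  have hvolΛ : volume (cube ν L) = c := by
    rw [volume_cube, hc, ENNReal.ofReal_pow hL.le]
  set μp : Measure (EuclideanSpace ℝ (Fin ν)) := c⁻¹ • volume.restrict (cube ν L) with hμp
  have hμpΛ : μp (cube ν L) = 1 := by
    rw [hμp, Measure.smul_apply, Measure.restrict_apply (cube_measurable ν L),
      Set.inter_self, hvolΛ, smul_eq_mul, ENNReal.inv_mul_cancel hc0 hctop]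
  haveI : IsProbabilityMeasure μp := by
    constructor
    rw [hμp, Measure.smul_apply, Measure.restrict_apply_univ, hvolΛ, smul_eq_mul,
      ENNReal.inv_mul_cancel hc0 hctop]
  set T : ℝ := ∫ p, v (p.1 - p.2) ∂(μp.prod μp) with hT
  -- main inequality for each n
  have main : ∀ n : ℕ, 2 ≤ n →
      (A / (2 * L ^ ν)) * n ^ 2 - B * n ≤ ((n^2 - n : ℝ)/2) * T := by
    intro n hn
    set Pn : Measure (Fin n → EuclideanSpace ℝ (Fin ν)) := Measure.pi (fun _ => μp) with hPn
    haveI : IsProbabilityMeasure Pn := by rw [hPn]; infer_instance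
    have hmem : ∀ᵐ x ∂Pn, ∀ i, x i ∈ cube ν L := by
      have hpi : Pn (Set.univ.pi fun _ : Fin n => cube ν L) = 1 := by
        rw [hPn, Measure.pi_pi]
        simp [hμpΛ]
      have hcompl : Pn ((Set.univ.pi fun _ : Fin n => cube ν L)ᶜ) = 0 := by
        rw [measure_compl (MeasurableSet.univ_pi fun _ => cube_measurable ν L)
          (measure_ne_top _ _), hpi, measure_univ, tsub_self]
      refine (ae_iff.2 ?_)
      convert hcompl using 2
      ext x
      simp [Set.mem_pi]
    have hFint : Integrable (fun x : Fin n → EuclideanSpace ℝ (Fin ν) =>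
        ∑ i : Fin n, ∑ j : Fin n, if i < j then v (x i - x j) else 0) Pn := by
      refine integrable_finset_sum _ fun i _ => integrable_finset_sum _ fun j _ => ?_
      by_cases h : i < j
      · simp only [h, if_true]
        refine (integrable_const C).mono'
          ((hv_cont.comp ((continuous_apply i).sub (continuous_apply j))).aestronglyMeasurable) ?_
        exact ae_of_all _ fun x => by simpa using hC _
      · simp only [h, if_false]
        exact integrable_const 0
    have hle : (A / (2 * L ^ ν)) * n ^ 2 - B * n ≤
        ∫ x, (∑ i : Fin n, ∑ j : Fin n, if i < j then v (x i - x j) else 0) ∂Pn := by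
      have := integral_mono_ae (integrable_const ((A / (2 * L ^ ν)) * n ^ 2 - B * n)) hFint
        (hmem.mono fun x hx => hsup n hn x hx)
      rwa [integral_const, probReal_univ, one_smul] at this
    refine hle.trans (le_of_eq ?_)
    have hterm : ∀ i j : Fin n,
        (∫ x, (if i < j then v (x i - x j) else 0) ∂Pn) = if i < j then T else 0 := by
      intro i j
      by_cases h : i < j
      · simp only [h, if_true]
        have hmeas : AEMeasurable (fun x : Fin n → EuclideanSpace ℝ (Fin ν) => (x i, x j))
            (Measure.pi fun _ => μp) :=
          ((measurable_pi_apply i).prodMk (measurable_pi_apply j)).aemeasurable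
        have hsm : AEStronglyMeasurable
            (fun p : EuclideanSpace ℝ (Fin ν) × EuclideanSpace ℝ (Fin ν) => v (p.1 - p.2))
            ((Measure.pi fun _ : Fin n => μp).map (fun x => (x i, x j))) :=
          (hv_cont.comp (continuous_fst.sub continuous_snd)).aestronglyMeasurable
        rw [hT, ← pi_map_pair μp i j (ne_of_lt h), integral_map hmeas hsm, hPn]
      · simp [h]
    calc ∫ x, (∑ i : Fin n, ∑ j : Fin n, if i < j then v (x i - x j) else 0) ∂Pn
        = ∑ i : Fin n, ∑ j : Fin n, ∫ x, (if i < j then v (x i - x j) else 0) ∂Pn := by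
          rw [integral_finset_sum]
          · refine Finset.sum_congr rfl fun i _ => ?_
            rw [integral_finset_sum]
            intro j _
            by_cases h : i < j
            · simp only [h, if_true]
              refine (integrable_const C).mono'
                ((hv_cont.comp ((continuous_apply i).sub
                  (continuous_apply j))).aestronglyMeasurable) ?_
              exact ae_of_all _ fun x => by simpa using hC _
            · simp only [h, if_false]; exact integrable_const 0
          · intro i _
            refine integrable_finset_sum _ fun j _ => ?_
            by_cases h : i < j
            · simp only [h, if_true]
              refine (integrable_const C).mono'
                ((hv_cont.comp ((continuous_apply i).sub
                  (continuous_apply j))).aestronglyMeasurable) ?_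
              exact ae_of_all _ fun x => by simpa using hC _
            · simp only [h, if_false]; exact integrable_const 0
      _ = ∑ i : Fin n, ∑ j : Fin n, (if i < j then T else 0) := by
          exact Finset.sum_congr rfl fun i _ => Finset.sum_congr rfl fun j _ => hterm i j
      _ = ((n^2 - n : ℝ)/2) * T := count_pairs n T
  -- limit n → ∞ : A / (L^ν) ≤ T
  have hAVT : A / L ^ ν ≤ T := by
    by_contra hcon
    push_neg at hcon
    set d : ℝ := A / L ^ ν - T with hd
    have hd0 : 0 < d := by simp [hd]; linarith
    obtain ⟨n₀, hn₀⟩ := exists_nat_gt ((2 * B - T) / d)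
    have hn : (2:ℕ) ≤ n₀ + 2 := by omega
    have hmain := main (n₀ + 2) hn
    set N : ℝ := ((n₀ + 2 : ℕ) : ℝ) with hN
    have hN2 : (2:ℝ) ≤ N := by
      rw [hN]; push_cast; linarith [Nat.cast_nonneg (α := ℝ) n₀]
    have hNgt : (2 * B - T) / d < N := by
      rw [hN]; push_cast; linarith [hn₀]
    have hhalf : A / (2 * L ^ ν) = (A / L ^ ν) / 2 := by
      rw [div_div, mul_comm]
    rw [hhalf] at hmain
    -- hmain : (A/L^ν)/2 * N^2 - B*N ≤ ((N^2 - N)/2) * T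
    have hNd : 2 * B - T < N * d := by
      calc 2 * B - T = ((2 * B - T) / d) * d := by field_simp
        _ < N * d := by
          apply mul_lt_mul_of_pos_right hNgt hd0
    have hAV : A / L ^ ν = T + d := by rw [hd]; ring
    rw [hAV] at hmain
    have hNpos : (0:ℝ) < N := by linarith
    clear_value T N d
    have e1 : d * (N * N) ≤ (2 * B - T) * N := by nlinarith [hmain]
    have e2 : (2 * B - T) * N < (N * d) * N := mul_lt_mul_of_pos_right hNd hNpos
    nlinarith [e1, e2]
  -- now express T
  have hTK : T = ((∫ z, v z * wt ν L z) * (L ^ ν)⁻¹) * (L ^ ν)⁻¹ := by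
    rw [hT, hμp, prod_smul_prod, integral_smul_measure,
      claimK ν v hv_cont hv_int C hC L]
    rw [ENNReal.toReal_mul, ENNReal.toReal_inv, ENNReal.toReal_ofReal hV.le, smul_eq_mul]
    ring
  rw [hTK] at hAVT
  rw [div_le_iff₀ hV] at hAVT
  calc A ≤ (∫ z, v z * wt ν L z) * (L ^ ν)⁻¹ * (L ^ ν)⁻¹ * L ^ ν := hAVT
    _ = (∫ z, v z * wt ν L z) * (L ^ ν)⁻¹ := by
        field_simp


/-- **Optimality of the superstability constant.** If `A ∈ ℝ`, `B ≥ 0` are such that for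
some `L₀ > 0`, for every cube of side `L ≥ L₀` (volume `V = L^ν`), every `n ≥ 2` and all
points `x₁, …, xₙ` in the cube one has
`∑_{i<j} v(xᵢ - xⱼ) ≥ (A/(2V)) n² - B n`, then necessarily `A ≤ v̂(0)`. -/
theorem superstability_constant_optimal
    (ν : ℕ) (hν : 1 ≤ ν)
    (v : EuclideanSpace ℝ (Fin ν) → ℝ)
    (hv_cont : Continuous v)
    (hv_int : Integrable v)
    (m : Measure (EuclideanSpace ℝ (Fin ν))) [IsFiniteMeasure m]
    (hv_posType : ∀ x : EuclideanSpace ℝ (Fin ν),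
      (v x : ℂ) = ∫ q, Complex.exp (Complex.I * ((inner ℝ q x : ℝ) : ℂ)) ∂m)
    (hv0 : 0 < ∫ x, v x)
    (A B : ℝ) (hB : 0 ≤ B)
    (L₀ : ℝ) (hL₀ : 0 < L₀)
    (hsuper : ∀ L : ℝ, L₀ ≤ L → ∀ n : ℕ, 2 ≤ n →
      ∀ x : Fin n → EuclideanSpace ℝ (Fin ν), (∀ i, x i ∈ cube ν L) →
        (A / (2 * L ^ ν)) * n ^ 2 - B * n ≤
          ∑ i : Fin n, ∑ j : Fin n, if i < j then v (x i - x j) else 0) :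
    A ≤ ∫ x, v x := by
  -- a uniform bound on `v` from the positive-type representation
  have h0 : v 0 = (m Set.univ).toReal := by
    have := hv_posType 0
    simp only [inner_zero_right, Complex.ofReal_zero, mul_zero, Complex.exp_zero] at this
    rw [integral_const, measureReal_def] at this
    rw [Complex.real_smul, mul_one] at this
    exact_mod_cast this
  have hC : ∀ x, |v x| ≤ (m Set.univ).toReal := by
    intro x
    calc |v x| = ‖(v x : ℂ)‖ := by simp
      _ = ‖∫ q, Complex.exp (Complex.I * ((inner ℝ q x : ℝ) : ℂ)) ∂m‖ := by rw [hv_posType x]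
      _ ≤ ∫ q, ‖Complex.exp (Complex.I * ((inner ℝ q x : ℝ) : ℂ))‖ ∂m :=
          norm_integral_le_integral_norm _
      _ = (m Set.univ).toReal := by
          have : ∀ q : EuclideanSpace ℝ (Fin ν),
              ‖Complex.exp (Complex.I * ((inner ℝ q x : ℝ) : ℂ))‖ = 1 := fun q => by
            rw [Complex.norm_exp]
            simp
          simp only [this]
          simp [measureReal_def]
  -- fixed-`L` consequence
  have key : ∀ k : ℕ, A ≤ ∫ z, v z * wt ν (L₀ + k) z * ((L₀ + k) ^ ν)⁻¹ := by
    intro k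
    have hLk : (0:ℝ) < L₀ + k := by positivity
    have h := step_fixed ν v hv_cont hv_int _ hC A B (L₀ + k) hLk
      (hsuper (L₀ + k) (by linarith [Nat.cast_nonneg (α := ℝ) k]))
    rwa [← integral_mul_const] at h
  -- dominated convergence as `k → ∞`
  have hlim : Filter.Tendsto (fun k : ℕ => ∫ z, v z * wt ν (L₀ + k) z * ((L₀ + k) ^ ν)⁻¹)
      Filter.atTop (nhds (∫ x, v x)) := by
    refine tendsto_integral_of_dominated_convergence (fun z => |v z|)
      (fun k => ((hv_cont.mul (wt_continuous ν (L₀ + k))).mul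
        continuous_const).aestronglyMeasurable) hv_int.abs (fun k => ?_) ?_
    · refine Filter.Eventually.of_forall fun z => ?_
      have hLk : (0:ℝ) < L₀ + k := by positivity
      have hVk : (0:ℝ) < (L₀ + k) ^ ν := pow_pos hLk ν
      have h1 : 0 ≤ wt ν (L₀ + k) z * ((L₀ + k) ^ ν)⁻¹ :=
        mul_nonneg (wt_nonneg _ _ _) (by positivity)
      have h2 : wt ν (L₀ + k) z * ((L₀ + k) ^ ν)⁻¹ ≤ 1 := by
        rw [mul_inv_le_iff₀ hVk, one_mul]
        exact wt_le ν (L₀ + k) hLk.le z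
      calc ‖v z * wt ν (L₀ + k) z * ((L₀ + k) ^ ν)⁻¹‖
          = |v z| * (wt ν (L₀ + k) z * ((L₀ + k) ^ ν)⁻¹) := by
            rw [mul_assoc, Real.norm_eq_abs, abs_mul, abs_of_nonneg h1]
        _ ≤ |v z| * 1 := by gcongr
        _ = |v z| := mul_one _
    · refine Filter.Eventually.of_forall fun z => ?_
      have hfact : ∀ i : Fin ν, Filter.Tendsto
          (fun k : ℕ => max ((L₀ + k) - |z i|) 0 * (L₀ + k)⁻¹) Filter.atTop (nhds 1) := by
        intro i
        have hat : Filter.Tendsto (fun k : ℕ => (L₀ + k : ℝ)) Filter.atTop Filter.atTop :=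
          Filter.tendsto_atTop_add_const_left _ L₀ tendsto_natCast_atTop_atTop
        have hinv : Filter.Tendsto (fun k : ℕ => ((L₀ + k : ℝ))⁻¹) Filter.atTop (nhds 0) :=
          hat.inv_tendsto_atTop
        have h1 : Filter.Tendsto (fun k : ℕ => 1 - |z i| * (L₀ + k : ℝ)⁻¹)
            Filter.atTop (nhds 1) := by
          have := (hinv.const_mul (|z i|)).const_sub 1
          simpa using this
        have heq : (fun k : ℕ => max ((L₀ + k) - |z i|) 0 * (L₀ + k)⁻¹) =ᶠ[Filter.atTop]
            (fun k : ℕ => max (1 - |z i| * (L₀ + k : ℝ)⁻¹) 0) := by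
          refine Filter.Eventually.of_forall fun k => ?_
          have hLk : (0:ℝ) < L₀ + k := by positivity
          show max ((L₀ + k) - |z i|) 0 * (L₀ + k)⁻¹ = max (1 - |z i| * (L₀ + k : ℝ)⁻¹) 0
          rw [max_mul_of_nonneg _ _ (inv_nonneg.2 hLk.le), zero_mul, sub_mul,
            mul_inv_cancel₀ hLk.ne']
        have : Filter.Tendsto (fun k : ℕ => max (1 - |z i| * (L₀ + k : ℝ)⁻¹) 0)
            Filter.atTop (nhds 1) := by
          have hmax := h1.max (tendsto_const_nhds (x := (0:ℝ)))
          simpa using hmax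
        exact Filter.Tendsto.congr' heq.symm this
      have hprod : Filter.Tendsto
          (fun k : ℕ => ∏ i : Fin ν, max ((L₀ + k) - |z i|) 0 * (L₀ + k)⁻¹)
          Filter.atTop (nhds 1) := by
        have := tendsto_finset_prod (Finset.univ : Finset (Fin ν))
          (fun i _ => hfact i)
        simpa using this
      have heq2 : ∀ k : ℕ, v z * wt ν (L₀ + k) z * ((L₀ + k) ^ ν)⁻¹ =
          v z * ∏ i : Fin ν, max ((L₀ + k) - |z i|) 0 * (L₀ + k)⁻¹ := by
        intro k
        rw [Finset.prod_mul_distrib, Finset.prod_const, Finset.card_univ,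
          Fintype.card_fin, ← inv_pow, mul_assoc]
        rfl
      have := (tendsto_const_nhds (x := v z)).mul hprod
      rw [mul_one] at this
      exact Filter.Tendsto.congr (fun k => (heq2 k).symm) this
  exact ge_of_tendsto hlim (Filter.Eventually.of_forall key)
end
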